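/- arXiv:1910.05729 — 4 statements merged into one kernel-verified Lean document; each statement's English description precedes it below -/
import Mathlib

section
/- Symmetric-subspace extension identity: for all positive integers n, t, Σ_{α ∈ S↑_{n,t}} Σ_{x ∈ {0,1}^n} √((1 + f_x(α))/(2^n + t)) · (|Sym(α)⟩ ⊗ |x⟩) ⊗ |Sym(α^{+x})⟩ = √((t+1)/(2^n + t)) · Σ_{β ∈ S↑_{n,t+1}} |Sym(β)⟩ ⊗ |Sym(β)⟩, as an equality of vectors in (ℂ^{2^n})^{⊗(t+1)} ⊗ (ℂ^{2^n})^{⊗(t+1)}, where the first factor |Sym(α)⟩ ⊗ |x⟩ is regarded as a vector in (ℂ^{2^n})^{⊗(t+1)}; here the prefactor √((t+1)/(2^n + t)) is the square root of the ratio of the dimensions of the t-fold and (t+1)-fold symmetric subspaces. -/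
open scoped BigOperators

/-- The number of entries of the tuple `α` that are equal to `x`. -/
def cnt {n t : ℕ} (α : Fin t → Fin (2 ^ n)) (x : Fin (2 ^ n)) : ℕ :=
  (Finset.univ.filter fun i => α i = x).card

/-- The symmetric-subspace basis vector `|Sym(α)⟩` in `(ℂ^{2^n})^{⊗ t}`,
the tensor power being realized as functions on `t`-tuples of basis indices. -/
noncomputable def symVec (n t : ℕ) (α : Fin t → Fin (2 ^ n)) :
    (Fin t → Fin (2 ^ n)) → ℂ :=
  fun z =>
    ((Real.sqrt ((t.factorial * ∏ x : Fin (2 ^ n), (cnt α x).factorial : ℕ)) : ℂ))⁻¹ *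
      ∑ σ : Equiv.Perm (Fin t), if z = α ∘ σ then 1 else 0

/-- The tensor product of two vectors of `(ℂ^{2^n})^{⊗(t+1)}`, realized as a function
on pairs of `(t+1)`-tuples of basis indices. -/
def tens {n t : ℕ} (u v : (Fin (t + 1) → Fin (2 ^ n)) → ℂ) :
    ((Fin (t + 1) → Fin (2 ^ n)) × (Fin (t + 1) → Fin (2 ^ n))) → ℂ :=
  fun p => u p.1 * v p.2

/-- `u ⊗ |x⟩` : the vector `u ∈ (ℂ^{2^n})^{⊗ t}` with an extra last tensor factor `|x⟩`,
regarded as a vector of `(ℂ^{2^n})^{⊗(t+1)}`. -/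
def extLast {n t : ℕ} (u : (Fin t → Fin (2 ^ n)) → ℂ) (x : Fin (2 ^ n)) :
    (Fin (t + 1) → Fin (2 ^ n)) → ℂ :=
  fun z => if z (Fin.last t) = x then u (Fin.init z) else 0

noncomputable def fiberPermEquiv {m N : ℕ} (γ u : Fin m → Fin N) :
    {σ : Equiv.Perm (Fin m) // γ ∘ σ = u} ≃
      ∀ y : Fin N, ({i : Fin m // u i = y} ≃ {j : Fin m // γ j = y}) where
  toFun σ y :=
    { toFun := fun i => ⟨σ.1 i.1, by
        have h := congrFun σ.2 i.1
        simp only [Function.comp_apply] at h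
        rw [h, i.2]⟩
      invFun := fun j => ⟨σ.1.symm j.1, by
        have h := congrFun σ.2 (σ.1.symm j.1)
        simp only [Function.comp_apply, Equiv.apply_symm_apply] at h
        rw [← h, j.2]⟩
      left_inv := fun i => Subtype.ext (σ.1.symm_apply_apply i.1)
      right_inv := fun j => Subtype.ext (σ.1.apply_symm_apply j.1) }
  invFun e := ⟨Equiv.ofFiberEquiv e, funext fun i => Equiv.ofFiberEquiv_map e i⟩
  left_inv := by
    rintro ⟨σ, hσ⟩
    apply Subtype.ext
    apply Equiv.ext
    intro i
    simp [Equiv.ofFiberEquiv]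
  right_inv := by
    intro e
    funext y
    apply Equiv.ext
    rintro ⟨i, rfl⟩
    apply Subtype.ext
    simp only [Equiv.ofFiberEquiv, Equiv.trans_apply, Equiv.sigmaCongrRight_apply]
    rfl

lemma cnt_card {n m : ℕ} (γ : Fin m → Fin (2 ^ n)) (y : Fin (2 ^ n)) :
    Fintype.card {i : Fin m // γ i = y} = cnt γ y := by
  rw [cnt, Fintype.card_subtype]

lemma card_perm_sols {n m : ℕ} (γ u : Fin m → Fin (2 ^ n)) :
    Fintype.card {σ : Equiv.Perm (Fin m) // γ ∘ σ = u}
      = if ∀ y, cnt u y = cnt γ y then ∏ y : Fin (2 ^ n), (cnt γ y).factorial else 0 := by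
  rw [Fintype.card_congr (fiberPermEquiv γ u), Fintype.card_pi]
  split
  · next h =>
    refine Finset.prod_congr rfl fun y _ => ?_
    have hc : Fintype.card {i : Fin m // u i = y} = Fintype.card {j : Fin m // γ j = y} := by
      rw [cnt_card, cnt_card, h]
    rw [Fintype.card_equiv (Fintype.equivOfCardEq hc), cnt_card, h]
  · next h =>
    push_neg at h
    obtain ⟨y, hy⟩ := h
    refine Finset.prod_eq_zero (Finset.mem_univ y) ?_
    rw [Fintype.card_eq_zero_iff]
    exact ⟨fun e => hy (by rw [← cnt_card, ← cnt_card]; exact Fintype.card_congr e)⟩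

lemma exists_perm_of_cnt_eq {n m : ℕ} {γ u : Fin m → Fin (2 ^ n)}
    (h : ∀ y, cnt u y = cnt γ y) : ∃ σ : Equiv.Perm (Fin m), γ ∘ σ = u := by
  have hpos : 0 < Fintype.card {σ : Equiv.Perm (Fin m) // γ ∘ σ = u} := by
    rw [card_perm_sols, if_pos h]
    exact Finset.prod_pos fun y _ => Nat.factorial_pos _
  obtain ⟨⟨σ, hσ⟩⟩ := Fintype.card_pos_iff.mp hpos
  exact ⟨σ, hσ⟩

lemma monotone_cnt_unique {n m : ℕ} {γ u : Fin m → Fin (2 ^ n)}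
    (hγ : Monotone γ) (hu : Monotone u) (h : ∀ y, cnt u y = cnt γ y) : u = γ := by
  obtain ⟨σ, hσ⟩ := exists_perm_of_cnt_eq h
  have := Tuple.unique_monotone (f := γ) (σ := σ) (τ := 1) (by rw [hσ]; exact hu)
    (by simpa using hγ)
  simpa [hσ] using this

lemma cnt_comp_perm {n m : ℕ} (γ : Fin m → Fin (2 ^ n)) (σ : Equiv.Perm (Fin m))
    (y : Fin (2 ^ n)) : cnt (γ ∘ σ) y = cnt γ y := by
  rw [cnt, cnt, ← Fintype.card_subtype, ← Fintype.card_subtype]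
  exact Fintype.card_congr (σ.subtypeEquiv fun a => Iff.rfl)

lemma symVec_eval {n m : ℕ} (γ u : Fin m → Fin (2 ^ n)) :
    symVec n m γ u =
      ((Real.sqrt ((m.factorial * ∏ x : Fin (2 ^ n), (cnt γ x).factorial : ℕ)) : ℂ))⁻¹ *
        ((if ∀ y, cnt u y = cnt γ y then ∏ y : Fin (2 ^ n), (cnt γ y).factorial else 0 : ℕ) : ℂ) := by
  rw [symVec, ← card_perm_sols γ u]
  congr 1
  rw [Finset.sum_boole]
  norm_cast
  rw [Fintype.card_subtype]
  congr 1
  apply Finset.filter_congr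
  intro σ _
  exact eq_comm

lemma symVec_eval_zero {n m : ℕ} (γ u : Fin m → Fin (2 ^ n))
    (h : ¬ ∀ y, cnt u y = cnt γ y) : symVec n m γ u = 0 := by
  rw [symVec_eval, if_neg h]; simp

lemma cnt_init {n t : ℕ} (z : Fin (t + 1) → Fin (2 ^ n)) (y : Fin (2 ^ n)) :
    cnt z y = cnt (Fin.init z) y + (if z (Fin.last t) = y then 1 else 0) := by
  rw [cnt, cnt, Finset.card_filter, Finset.card_filter, Fin.sum_univ_castSucc]
  simp [Fin.init]
  rw [Finset.card_filter]
  congr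

lemma sqrt_key {a p f T D : ℝ} (ha : 0 ≤ a) (hp : 0 < p) (hf : 0 < f) (hT : 0 < T)
    (hD : 0 < D) :
    Real.sqrt ((1 + a) / D) * ((Real.sqrt (f * p))⁻¹ * p)
      = Real.sqrt (T / D) * ((Real.sqrt (T * f * ((a + 1) * p)))⁻¹ * ((a + 1) * p)) := by
  have h1 : (0:ℝ) ≤ 1 + a := by linarith
  rw [Real.sqrt_div h1, Real.sqrt_div hT.le, Real.sqrt_mul hf.le,
    Real.sqrt_mul (by positivity : (0:ℝ) ≤ T * f), Real.sqrt_mul hT.le,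
    Real.sqrt_mul (by linarith : (0:ℝ) ≤ a + 1)]
  have hsa : Real.sqrt (a + 1) * Real.sqrt (a + 1) = a + 1 := Real.mul_self_sqrt (by linarith)
  have hsT : Real.sqrt T * Real.sqrt T = T := Real.mul_self_sqrt hT.le
  have hsp : Real.sqrt p * Real.sqrt p = p := Real.mul_self_sqrt hp.le
  have h1a : Real.sqrt (1 + a) = Real.sqrt (a + 1) := by rw [add_comm]
  have hpa : (0:ℝ) < Real.sqrt (a + 1) := Real.sqrt_pos.mpr (by linarith)
  have hpT : (0:ℝ) < Real.sqrt T := Real.sqrt_pos.mpr hT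
  have hpp : (0:ℝ) < Real.sqrt p := Real.sqrt_pos.mpr hp
  have hpf : (0:ℝ) < Real.sqrt f := Real.sqrt_pos.mpr hf
  have hpD : (0:ℝ) < Real.sqrt D := Real.sqrt_pos.mpr hD
  rw [h1a]
  field_simp
  ring_nf
  rw [Real.sq_sqrt h1]


/-- **Symmetric-subspace extension identity:**
`∑_{α ∈ S↑_{n,t}} ∑_{x ∈ {0,1}^n} √((1 + f_x(α))/(2^n + t)) (|Sym(α)⟩⊗|x⟩) ⊗ |Sym(α^{+x})⟩
  = √((t+1)/(2^n + t)) ∑_{β ∈ S↑_{n,t+1}} |Sym(β)⟩ ⊗ |Sym(β)⟩`,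
where `α^{+x} ∈ S↑_{n,t+1}` is `α` with one copy of `x` inserted so as to remain ordered
(characterized here as the monotone tuple `ins α x` whose multiplicities are those of `α`
with one `x` added). -/
theorem symVec_extension_identity (n t : ℕ) (hn : 0 < n) (ht : 0 < t)
    (ins : (Fin t → Fin (2 ^ n)) → Fin (2 ^ n) → (Fin (t + 1) → Fin (2 ^ n)))
    (hins : ∀ α, Monotone α → ∀ x, Monotone (ins α x) ∧
      ∀ y, cnt (ins α x) y = cnt α y + (if y = x then 1 else 0)) :
    ∑ α ∈ Finset.univ.filter (fun α : Fin t → Fin (2 ^ n) => Monotone α),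
      ∑ x : Fin (2 ^ n),
        (Real.sqrt ((1 + cnt α x : ℝ) / ((2 ^ n : ℝ) + t)) : ℂ) •
          tens (extLast (symVec n t α) x) (symVec n (t + 1) (ins α x))
    = (Real.sqrt ((t + 1 : ℝ) / ((2 ^ n : ℝ) + t)) : ℂ) •
        ∑ β ∈ Finset.univ.filter (fun β : Fin (t + 1) → Fin (2 ^ n) => Monotone β),
          tens (symVec n (t + 1) β) (symVec n (t + 1) β) := by

  funext p
  obtain ⟨z, w⟩ := p
  simp only [Finset.sum_apply, Pi.smul_apply, smul_eq_mul, tens, extLast]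
  set x0 := z (Fin.last t) with hx0
  set α0 := Fin.init z ∘ Tuple.sort (Fin.init z) with hα0
  set β0 := z ∘ Tuple.sort z with hβ0
  have hmα0 : Monotone α0 := Tuple.monotone_sort _
  have hmβ0 : Monotone β0 := Tuple.monotone_sort _
  have hcα0 : ∀ y, cnt (Fin.init z) y = cnt α0 y := fun y => (cnt_comp_perm _ _ y).symm
  have hcβ0 : ∀ y, cnt z y = cnt β0 y := fun y => (cnt_comp_perm _ _ y).symm
  -- RHS collapse
  have hRHS : ∑ β ∈ Finset.univ.filter (fun β : Fin (t + 1) → Fin (2 ^ n) => Monotone β),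
      symVec n (t + 1) β z * symVec n (t + 1) β w
      = symVec n (t + 1) β0 z * symVec n (t + 1) β0 w := by
    refine Finset.sum_eq_single_of_mem β0
      (Finset.mem_filter.mpr ⟨Finset.mem_univ _, hmβ0⟩) (fun b hb hbne => ?_)
    have hmb := (Finset.mem_filter.mp hb).2
    have hzero : ¬ ∀ y, cnt z y = cnt b y := by
      intro hcb
      exact hbne (monotone_cnt_unique hmβ0 hmb fun y => (hcb y).symm.trans (hcβ0 y))
    rw [symVec_eval_zero _ _ hzero, zero_mul]
  rw [hRHS]
  -- LHS collapse over α
  rw [Finset.sum_eq_single_of_mem α0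
    (Finset.mem_filter.mpr ⟨Finset.mem_univ _, hmα0⟩) ?side]
  case side =>
    intro b hb hbne
    have hmb := (Finset.mem_filter.mp hb).2
    have hzero : ¬ ∀ y, cnt (Fin.init z) y = cnt b y := by
      intro hcb
      exact hbne (monotone_cnt_unique hmα0 hmb fun y => (hcb y).symm.trans (hcα0 y))
    refine Finset.sum_eq_zero fun x _ => ?_
    rw [symVec_eval_zero _ _ hzero]
    simp
  -- LHS collapse over x
  rw [Fintype.sum_eq_single x0 ?xside]
  case xside =>
    intro x hx
    rw [if_neg fun h => hx (hx0 ▸ h.symm)]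
    simp
  rw [if_pos rfl]
  -- identify ins α0 x0 with β0
  have hβeq : ins α0 x0 = β0 := by
    refine monotone_cnt_unique hmβ0 (hins α0 hmα0 x0).1 fun y => ?_
    rw [(hins α0 hmα0 x0).2 y, ← hcβ0 y, cnt_init z y, ← hcα0 y, ← hx0]
    by_cases hy : y = x0
    · simp [hy]
    · simp [hy, Ne.symm hy]
  rw [hβeq]
  -- the scalar identity
  have key : (Real.sqrt ((1 + cnt α0 x0 : ℝ) / ((2 ^ n : ℝ) + t)) : ℂ) *
      symVec n t α0 (Fin.init z)
      = (Real.sqrt ((t + 1 : ℝ) / ((2 ^ n : ℝ) + t)) : ℂ) * symVec n (t + 1) β0 z := by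
    rw [symVec_eval α0 (Fin.init z), if_pos hcα0, symVec_eval β0 z, if_pos hcβ0]
    have hQ : ∏ y : Fin (2 ^ n), (cnt β0 y).factorial
        = (cnt α0 x0 + 1) * ∏ y : Fin (2 ^ n), (cnt α0 y).factorial := by
      have hcnt : ∀ y, cnt β0 y = cnt α0 y + if x0 = y then 1 else 0 := by
        intro y
        rw [← hcβ0 y, cnt_init z y, ← hcα0 y, ← hx0]
      rw [← Finset.mul_prod_erase Finset.univ (fun y => (cnt β0 y).factorial)
          (Finset.mem_univ x0),
        ← Finset.mul_prod_erase Finset.univ (fun y => (cnt α0 y).factorial)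
          (Finset.mem_univ x0)]
      have h1 : (cnt β0 x0).factorial = (cnt α0 x0 + 1) * (cnt α0 x0).factorial := by
        rw [hcnt x0, if_pos rfl, Nat.factorial_succ]
      have h2 : ∏ y ∈ Finset.univ.erase x0, (cnt β0 y).factorial
          = ∏ y ∈ Finset.univ.erase x0, (cnt α0 y).factorial := by
        refine Finset.prod_congr rfl fun y hy => ?_
        rw [hcnt y, if_neg fun h => (Finset.mem_erase.mp hy).1 h.symm, add_zero]
      rw [h1, h2]
      ring
    rw [hQ]
    have hD : (0:ℝ) < (2 ^ n : ℝ) + t := by positivity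
    have hP : (0:ℝ) < ((∏ y : Fin (2 ^ n), (cnt α0 y).factorial : ℕ) : ℝ) := by
      exact_mod_cast Finset.prod_pos fun y _ => Nat.factorial_pos _
    have hf : (0:ℝ) < ((t.factorial : ℕ) : ℝ) := by exact_mod_cast t.factorial_pos
    have keyR := sqrt_key (a := (cnt α0 x0 : ℝ))
      (p := ((∏ y : Fin (2 ^ n), (cnt α0 y).factorial : ℕ) : ℝ))
      (f := ((t.factorial : ℕ) : ℝ)) (T := (t : ℝ) + 1) (D := (2 ^ n : ℝ) + t)
      (by positivity) hP hf (by positivity) hD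
    have e1 : ((t.factorial * ∏ x : Fin (2 ^ n), (cnt α0 x).factorial : ℕ) : ℝ)
        = ((t.factorial : ℕ) : ℝ) * ((∏ y : Fin (2 ^ n), (cnt α0 y).factorial : ℕ) : ℝ) := by
      push_cast; ring
    have e2 : (((t + 1).factorial * ((cnt α0 x0 + 1) * ∏ x : Fin (2 ^ n), (cnt α0 x).factorial) : ℕ) : ℝ)
        = ((t : ℝ) + 1) * ((t.factorial : ℕ) : ℝ) *
            (((cnt α0 x0 : ℝ) + 1) * ((∏ y : Fin (2 ^ n), (cnt α0 y).factorial : ℕ) : ℝ)) := by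
      push_cast [Nat.factorial_succ]; ring
    rw [e1, e2]
    exact_mod_cast keyR
  rw [← mul_assoc, key, mul_assoc]
end

section
/- Proposition (mixed twirling with a design): let D be an n-qubit unitary t-design and let 0 ≤ ℓ ≤ t. Then the mixed twirling channels coincide: T^{(ℓ, t−ℓ)}_Haar(Γ) = T^{(ℓ, t−ℓ)}_D(Γ) for every linear operator Γ on (ℂ^{2^n})^{⊗t}. -/
open Matrix MeasureTheory
open scoped BigOperators

/-- The `t`-fold tensor power `U^{⊗t}` of a matrix `U` on `ℂ^m`, acting on
`(ℂ^m)^{⊗t}`, the tensor power being realized via `t`-tuples of basis indices. -/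
def tpow {m : ℕ} (U : Matrix (Fin m) (Fin m) ℂ) (t : ℕ) :
    Matrix (Fin t → Fin m) (Fin t → Fin m) ℂ :=
  fun z w => ∏ i, U (z i) (w i)

/-- The operator `U^{⊗ℓ} ⊗ (U†)^{⊗k}` acting on `(ℂ^m)^{⊗(ℓ+k)}`. -/
def mixedPow {m : ℕ} (U : Matrix (Fin m) (Fin m) ℂ) (ℓ k : ℕ) :
    Matrix ((Fin ℓ → Fin m) × (Fin k → Fin m)) ((Fin ℓ → Fin m) × (Fin k → Fin m)) ℂ :=
  fun p q => tpow U ℓ p.1 q.1 * tpow Uᴴ k p.2 q.2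

/-!
Each entry of `(U^{⊗ℓ} ⊗ Ū^{⊗k}) Γ (U^{⊗ℓ} ⊗ Ū^{⊗k})†` is a linear combination, with coefficients
the entries of `Γ`, of the degree-`(t, t)` monomials `U^{⊗t}[P, A] · conj U^{⊗t}[Q, B]`: an entry of
`Ū^{⊗k}` is the conjugate of an entry of `U^{⊗k}` with row and column swapped, so the two
conjugated factors trade places. Applying the `t`-design property to the matrix units `E_{AB}`
says precisely that every such monomial has the same `D`-average as Haar integral, and linearity
of both averages finishes the proof.
-/

namespace Matrix

variable {ι κ α : Type*} [Fintype ι]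

theorem mul_mul_conjTranspose_apply [CommSemiring α] [StarRing α]
    (M : Matrix κ ι α) (Γ : Matrix ι ι α) (p q : κ) :
    (M * Γ * Mᴴ) p q = ∑ a, ∑ b, Γ a b * (M p a * star (M q b)) := by
  simp only [mul_apply, conjTranspose_apply, Finset.sum_mul]
  rw [Finset.sum_comm]
  exact Finset.sum_congr rfl fun a _ => Finset.sum_congr rfl fun b _ => by ring

theorem mul_single_one_mul_conjTranspose_apply [DecidableEq ι] [CommSemiring α] [StarRing α]
    (M : Matrix κ ι α) (a b : ι) (p q : κ) :
    (M * single a b (1 : α) * Mᴴ) p q = M p a * star (M q b) := by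
  simp [mul_mul_conjTranspose_apply, single_apply, ite_and]

end Matrix

open Matrix

section TensorPower

variable {m : ℕ}

theorem tpow_conjTranspose_apply (U : Matrix (Fin m) (Fin m) ℂ) (t : ℕ) (x y : Fin t → Fin m) :
    tpow Uᴴ t x y = star (tpow U t y x) := by
  simp [tpow, conjTranspose_apply]

theorem tpow_append_apply (U : Matrix (Fin m) (Fin m) ℂ) {ℓ k : ℕ}
    (x z : Fin ℓ → Fin m) (y w : Fin k → Fin m) :
    tpow U (ℓ + k) (Fin.append x y) (Fin.append z w) = tpow U ℓ x z * tpow U k y w := by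
  simp [tpow, Fin.prod_univ_add]

theorem mixedPow_mul_star_mixedPow (U : Matrix (Fin m) (Fin m) ℂ) {ℓ k : ℕ}
    (p q a b : (Fin ℓ → Fin m) × (Fin k → Fin m)) :
    mixedPow U ℓ k p a * star (mixedPow U ℓ k q b) =
      tpow U (ℓ + k) (Fin.append p.1 b.2) (Fin.append a.1 q.2) *
        star (tpow U (ℓ + k) (Fin.append q.1 a.2) (Fin.append b.1 p.2)) := by
  simp only [mixedPow, tpow_append_apply, tpow_conjTranspose_apply, star_mul', star_star]
  ring

theorem norm_tpow_apply_le_one {U : Matrix (Fin m) (Fin m) ℂ} (hU : U ∈ unitaryGroup (Fin m) ℂ)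
    {t : ℕ} (x y : Fin t → Fin m) : ‖tpow U t x y‖ ≤ 1 := by
  rw [tpow, norm_prod]
  exact Finset.prod_le_one (fun _ _ => norm_nonneg _)
    fun _ _ => entry_norm_bound_of_unitary hU _ _

theorem integrable_tpow_mul_star_tpow [MeasurableSpace (unitaryGroup (Fin m) ℂ)]
    [OpensMeasurableSpace (unitaryGroup (Fin m) ℂ)]
    (μ : Measure (unitaryGroup (Fin m) ℂ)) [IsFiniteMeasure μ] {t : ℕ} (x y z w : Fin t → Fin m) :
    Integrable (fun V : unitaryGroup (Fin m) ℂ =>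
      tpow (V : Matrix (Fin m) (Fin m) ℂ) t x y *
        star (tpow (V : Matrix (Fin m) (Fin m) ℂ) t z w)) μ := by
  have hV : Continuous fun V : unitaryGroup (Fin m) ℂ => (V : Matrix (Fin m) (Fin m) ℂ) :=
    continuous_subtype_val
  have hcont : Continuous fun V : unitaryGroup (Fin m) ℂ =>
      tpow (V : Matrix (Fin m) (Fin m) ℂ) t x y *
        star (tpow (V : Matrix (Fin m) (Fin m) ℂ) t z w) :=
    (continuous_finsetProd _ fun _ _ => hV.matrix_elem _ _).mul
      (continuous_finsetProd _ fun _ _ => hV.matrix_elem _ _).star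
  refine Integrable.of_bound hcont.aestronglyMeasurable 1 (ae_of_all _ fun V => ?_)
  rw [norm_mul, norm_star]
  exact mul_le_one₀ (norm_tpow_apply_le_one V.2 _ _) (norm_nonneg _)
    (norm_tpow_apply_le_one V.2 _ _)

end TensorPower

section Averages

variable {G : Type*} [MeasurableSpace G] {μ : Measure G} {D : Finset G}

theorem integral_mul_star_eq_average_of_twirl {κ : Type*} [Fintype κ] [DecidableEq κ]
    (M : G → Matrix κ κ ℂ)
    (htwirl : ∀ X : Matrix κ κ ℂ, ∀ p q, (D.card : ℂ)⁻¹ * ∑ U ∈ D, (M U * X * (M U)ᴴ) p q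
      = ∫ V, (M V * X * (M V)ᴴ) p q ∂μ)
    (p a q b : κ) :
    ∫ V, M V p a * star (M V q b) ∂μ = (D.card : ℂ)⁻¹ * ∑ U ∈ D, M U p a * star (M U q b) := by
  simpa only [mul_single_one_mul_conjTranspose_apply] using (htwirl (single a b 1) p q).symm

theorem integral_sum_const_mul_eq_average {ι : Type*} [Fintype ι] {f : ι → G → ℂ}
    (hf : ∀ i, Integrable (f i) μ)
    (hD : ∀ i, ∫ V, f i V ∂μ = (D.card : ℂ)⁻¹ * ∑ U ∈ D, f i U) (c : ι → ℂ) :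
    ∫ V, ∑ i, c i * f i V ∂μ = (D.card : ℂ)⁻¹ * ∑ U ∈ D, ∑ i, c i * f i U := by
  rw [integral_finsetSum _ fun i _ => (hf i).const_mul (c i), Finset.sum_comm, Finset.mul_sum]
  refine Finset.sum_congr rfl fun i _ => ?_
  rw [integral_const_mul, hD, ← Finset.mul_sum]
  ring

end Averages

theorem mixed_twirl_of_design_general (n ℓ k : ℕ)
    [MeasurableSpace (Matrix.unitaryGroup (Fin (2 ^ n)) ℂ)]
    [BorelSpace (Matrix.unitaryGroup (Fin (2 ^ n)) ℂ)]
    (μ : Measure (Matrix.unitaryGroup (Fin (2 ^ n)) ℂ))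
    [IsProbabilityMeasure μ]
    (D : Finset (Matrix.unitaryGroup (Fin (2 ^ n)) ℂ))
    (hdesign : ∀ X : Matrix (Fin (ℓ + k) → Fin (2 ^ n)) (Fin (ℓ + k) → Fin (2 ^ n)) ℂ,
      ∀ p q,
      (D.card : ℂ)⁻¹ *
          ∑ U ∈ D, (tpow (U : Matrix (Fin (2 ^ n)) (Fin (2 ^ n)) ℂ) (ℓ + k) * X *
            (tpow (U : Matrix (Fin (2 ^ n)) (Fin (2 ^ n)) ℂ) (ℓ + k))ᴴ) p q
        = ∫ V : Matrix.unitaryGroup (Fin (2 ^ n)) ℂ,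
            (tpow (V : Matrix (Fin (2 ^ n)) (Fin (2 ^ n)) ℂ) (ℓ + k) * X *
              (tpow (V : Matrix (Fin (2 ^ n)) (Fin (2 ^ n)) ℂ) (ℓ + k))ᴴ) p q ∂μ) :
    ∀ Γ : Matrix ((Fin ℓ → Fin (2 ^ n)) × (Fin k → Fin (2 ^ n)))
        ((Fin ℓ → Fin (2 ^ n)) × (Fin k → Fin (2 ^ n))) ℂ,
      ∀ p q,
      (∫ V : Matrix.unitaryGroup (Fin (2 ^ n)) ℂ,
          (mixedPow (V : Matrix (Fin (2 ^ n)) (Fin (2 ^ n)) ℂ) ℓ k * Γ *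
            (mixedPow (V : Matrix (Fin (2 ^ n)) (Fin (2 ^ n)) ℂ) ℓ k)ᴴ) p q ∂μ)
        = (D.card : ℂ)⁻¹ *
            ∑ U ∈ D, (mixedPow (U : Matrix (Fin (2 ^ n)) (Fin (2 ^ n)) ℂ) ℓ k * Γ *
              (mixedPow (U : Matrix (Fin (2 ^ n)) (Fin (2 ^ n)) ℂ) ℓ k)ᴴ) p q := by
  intro Γ p q
  simp only [mul_mul_conjTranspose_apply, mixedPow_mul_star_mixedPow,
    ← Fintype.sum_prod_type']
  exact integral_sum_const_mul_eq_average (fun _ => integrable_tpow_mul_star_tpow μ _ _ _ _)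
    (fun _ => integral_mul_star_eq_average_of_twirl _ hdesign _ _ _ _) _

/-- **Mixed twirling with a unitary design:** if `D` is an `n`-qubit unitary `t`-design
(with `t = ℓ + k`, stated entrywise with respect to the Haar probability measure `μ` on
`U(2^n)`), then the mixed twirling channels `T^{(ℓ, t-ℓ)}` with respect to the Haar measure
and with respect to `D` coincide on every operator `Γ` on `(ℂ^{2^n})^{⊗t}`. -/
theorem mixed_twirl_of_design (n ℓ k : ℕ)
    [MeasurableSpace (Matrix.unitaryGroup (Fin (2 ^ n)) ℂ)]
    [BorelSpace (Matrix.unitaryGroup (Fin (2 ^ n)) ℂ)]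
    (μ : Measure (Matrix.unitaryGroup (Fin (2 ^ n)) ℂ))
    [μ.IsHaarMeasure] [IsProbabilityMeasure μ]
    (D : Finset (Matrix.unitaryGroup (Fin (2 ^ n)) ℂ)) (hD : D.Nonempty)
    (hdesign : ∀ X : Matrix (Fin (ℓ + k) → Fin (2 ^ n)) (Fin (ℓ + k) → Fin (2 ^ n)) ℂ,
      ∀ p q,
      (D.card : ℂ)⁻¹ *
          ∑ U ∈ D, (tpow (U : Matrix (Fin (2 ^ n)) (Fin (2 ^ n)) ℂ) (ℓ + k) * X *
            (tpow (U : Matrix (Fin (2 ^ n)) (Fin (2 ^ n)) ℂ) (ℓ + k))ᴴ) p q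
        = ∫ V : Matrix.unitaryGroup (Fin (2 ^ n)) ℂ,
            (tpow (V : Matrix (Fin (2 ^ n)) (Fin (2 ^ n)) ℂ) (ℓ + k) * X *
              (tpow (V : Matrix (Fin (2 ^ n)) (Fin (2 ^ n)) ℂ) (ℓ + k))ᴴ) p q ∂μ) :
    ∀ Γ : Matrix ((Fin ℓ → Fin (2 ^ n)) × (Fin k → Fin (2 ^ n)))
        ((Fin ℓ → Fin (2 ^ n)) × (Fin k → Fin (2 ^ n))) ℂ,
      ∀ p q,
      (∫ V : Matrix.unitaryGroup (Fin (2 ^ n)) ℂ,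
          (mixedPow (V : Matrix (Fin (2 ^ n)) (Fin (2 ^ n)) ℂ) ℓ k * Γ *
            (mixedPow (V : Matrix (Fin (2 ^ n)) (Fin (2 ^ n)) ℂ) ℓ k)ᴴ) p q ∂μ)
        = (D.card : ℂ)⁻¹ *
            ∑ U ∈ D, (mixedPow (U : Matrix (Fin (2 ^ n)) (Fin (2 ^ n)) ℂ) ℓ k * Γ *
              (mixedPow (U : Matrix (Fin (2 ^ n)) (Fin (2 ^ n)) ℂ) ℓ k)ᴴ) p q :=
  mixed_twirl_of_design_general n ℓ k μ D hdesign
end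

section
/- Existence of the design-transition isometry: let n, t be positive integers, let D = {U_i}_{i∈I} be an n-qubit unitary t-design and D' = {U'_j}_{j∈J} be an n-qubit unitary t-design, and suppose |I| ≤ |J|. Then for every 0 ≤ ℓ ≤ t there exists an isometry W : ℂ^{I} → ℂ^{J} (a linear map with W†W = 𝟙) such that, as linear maps from (ℂ^{2^n})^{⊗t} to (ℂ^{2^n})^{⊗t} ⊗ ℂ^{J}, (𝟙 ⊗ W) ∘ (|I|^{-1/2} Σ_{i∈I} (U_i^{⊗ℓ} ⊗ (U_i†)^{⊗(t−ℓ)}) ⊗ |i⟩) = |J|^{-1/2} Σ_{j∈J} ((U'_j)^{⊗ℓ} ⊗ ((U'_j)†)^{⊗(t−ℓ)}) ⊗ |j⟩. -/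
open Matrix Kronecker MeasureTheory
open scoped BigOperators

/-- The controlled isometry `v ↦ |I|^{-1/2} ∑_i ((U_i^{⊗ℓ} ⊗ (U_i†)^{⊗k}) v) ⊗ |i⟩`
associated to a finite family `U : I → U(2^n)`, as a matrix. -/
noncomputable def ctrlDilation {n : ℕ} {I : Type} [Fintype I]
    (U : I → Matrix (Fin (2 ^ n)) (Fin (2 ^ n)) ℂ) (ℓ k : ℕ) :
    Matrix (((Fin ℓ → Fin (2 ^ n)) × (Fin k → Fin (2 ^ n))) × I)
      ((Fin ℓ → Fin (2 ^ n)) × (Fin k → Fin (2 ^ n))) ℂ :=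
  fun pi q => ((Real.sqrt (Fintype.card I) : ℂ))⁻¹ * mixedPow (U pi.2) ℓ k pi.1 q

open Matrix Module Submodule
open scoped InnerProductSpace

variable {E F G : Type*}
  [NormedAddCommGroup E] [InnerProductSpace ℂ E] [FiniteDimensional ℂ E]
  [NormedAddCommGroup F] [InnerProductSpace ℂ F] [FiniteDimensional ℂ F]
  [NormedAddCommGroup G] [InnerProductSpace ℂ G] [FiniteDimensional ℂ G]

/-- An inner-product preserving map into a given subspace of large enough dimension. -/
lemma exists_innerMap_into (L : Submodule ℂ F) (hd : finrank ℂ E ≤ finrank ℂ L) :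
    ∃ j : E →ₗ[ℂ] F, (∀ x y : E, ⟪j x, j y⟫_ℂ = ⟪x, y⟫_ℂ) ∧ ∀ x, j x ∈ L := by
  classical
  set bE := stdOrthonormalBasis ℂ E
  set bL := stdOrthonormalBasis ℂ L
  set f : Fin (finrank ℂ E) → F := fun i => (bL (Fin.castLE hd i) : F)
  have hf : Orthonormal ℂ f := by
    have h1 : Orthonormal ℂ (fun i : Fin (finrank ℂ ↥L) => (bL i : F)) := by
      rw [orthonormal_iff_ite] at *
      intro i j
      rw [← Submodule.coe_inner]
      exact orthonormal_iff_ite.mp bL.orthonormal i j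
    exact h1.comp (Fin.castLE hd) (Fin.castLE_injective hd)
  refine ⟨{ toFun := fun x => ∑ i, bE.repr x i • f i
            map_add' := by intro x y; simp [map_add, add_smul, Finset.sum_add_distrib]
            map_smul' := by intro c x; simp [Finset.smul_sum, smul_smul] }, ?_, ?_⟩
  · intro x y
    simp only [LinearMap.coe_mk, AddHom.coe_mk]
    rw [hf.inner_sum]
    have hx := bE.sum_repr x
    have hy := bE.sum_repr y
    calc ∑ i, (starRingEnd ℂ) (bE.repr x i) * bE.repr y i
        = ⟪∑ i, bE.repr x i • bE i, ∑ i, bE.repr y i • bE i⟫_ℂ := (bE.orthonormal.inner_sum _ _ _).symm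
      _ = ⟪x, y⟫_ℂ := by rw [hx, hy]
  · intro x
    simp only [LinearMap.coe_mk, AddHom.coe_mk]
    exact Submodule.sum_mem _ fun i _ => Submodule.smul_mem _ _ (SetLike.coe_mem _)

lemma exists_innerMap_comp (T : G →ₗ[ℂ] E) (S : G →ₗ[ℂ] F)
    (h : ∀ x y, ⟪T x, T y⟫_ℂ = ⟪S x, S y⟫_ℂ)
    (hd : finrank ℂ E ≤ finrank ℂ F) :
    ∃ W : E →ₗ[ℂ] F, (∀ x y, ⟪W x, W y⟫_ℂ = ⟪x, y⟫_ℂ) ∧ ∀ v, W (T v) = S v := by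
  classical
  have hker : LinearMap.ker T = LinearMap.ker S := by
    ext x
    simp only [LinearMap.mem_ker]
    rw [← inner_self_eq_zero (𝕜 := ℂ), ← inner_self_eq_zero (𝕜 := ℂ) (x := S x), h]
  have hrk : finrank ℂ (LinearMap.range T) = finrank ℂ (LinearMap.range S) := by
    have h1 := T.finrank_range_add_finrank_ker
    have h2 := S.finrank_range_add_finrank_ker
    rw [hker] at h1
    omega
  have hK := Submodule.finrank_add_finrank_orthogonal (K := LinearMap.range T)
  have hL := Submodule.finrank_add_finrank_orthogonal (K := LinearMap.range S)
  have hdKL : finrank ℂ ((LinearMap.range T)ᗮ) ≤ finrank ℂ ((LinearMap.range S)ᗮ) := by omega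
  obtain ⟨j, hj_inner, hj_mem⟩ := exists_innerMap_into (E := (LinearMap.range T)ᗮ)
    ((LinearMap.range S)ᗮ) hdKL
  set ψ : (LinearMap.range T) →ₗ[ℂ] F :=
    (Submodule.liftQ (LinearMap.ker T) S (le_of_eq hker)) ∘ₗ
      (T.quotKerEquivRange.symm : (LinearMap.range T) →ₗ[ℂ] (G ⧸ LinearMap.ker T)) with hψdef
  have hψ : ∀ x : G, ψ (T.rangeRestrict x) = S x := by
    intro x
    have h1 : T.rangeRestrict x = T.quotKerEquivRange (Submodule.Quotient.mk x) :=
      Subtype.ext (T.quotKerEquivRange_apply_mk x).symm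
    rw [hψdef, LinearMap.comp_apply, h1]
    simp only [LinearEquiv.coe_coe, LinearEquiv.symm_apply_apply]
    exact Submodule.liftQ_apply _ _ _
  have hψ_mem : ∀ u : LinearMap.range T, ψ u ∈ LinearMap.range S := by
    intro u
    obtain ⟨x, rfl⟩ := T.surjective_rangeRestrict u
    rw [hψ]; exact LinearMap.mem_range_self S x
  have hψ_inner : ∀ u v : LinearMap.range T, ⟪ψ u, ψ v⟫_ℂ = ⟪(u : E), (v : E)⟫_ℂ := by
    intro u v
    obtain ⟨x, rfl⟩ := T.surjective_rangeRestrict u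
    obtain ⟨y, rfl⟩ := T.surjective_rangeRestrict v
    rw [hψ, hψ, ← h]; rfl
  set P := orthogonalProjection (LinearMap.range T)
  set P' := orthogonalProjection ((LinearMap.range T)ᗮ)
  refine ⟨ψ ∘ₗ (P : E →ₗ[ℂ] LinearMap.range T) + j ∘ₗ (P' : E →ₗ[ℂ] (LinearMap.range T)ᗮ),
    ?_, ?_⟩
  · intro x y
    simp only [LinearMap.add_apply, LinearMap.comp_apply, ContinuousLinearMap.coe_coe]
    rw [inner_add_left, inner_add_right, inner_add_right]
    rw [Submodule.inner_right_of_mem_orthogonal (hψ_mem _) (hj_mem _),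
      Submodule.inner_left_of_mem_orthogonal (hψ_mem _) (hj_mem _)]
    rw [hψ_inner, hj_inner]
    have hx : (P x : E) + (P' x : E) = x := Submodule.starProjection_add_starProjection_orthogonal (K := LinearMap.range T) x
    have hy : (P y : E) + (P' y : E) = y := Submodule.starProjection_add_starProjection_orthogonal (K := LinearMap.range T) y
    calc ⟪(P x : E), (P y : E)⟫_ℂ + 0 + (0 + ⟪P' x, P' y⟫_ℂ)
        = ⟪(P x : E), (P y : E)⟫_ℂ + ⟪(P' x : E), (P' y : E)⟫_ℂ := by
          rw [Submodule.coe_inner]; ring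
      _ = ⟪(P x : E) + (P' x : E), (P y : E) + (P' y : E)⟫_ℂ := by
          rw [inner_add_left, inner_add_right, inner_add_right,
            Submodule.inner_right_of_mem_orthogonal (SetLike.coe_mem (P x)) (SetLike.coe_mem (P' y)),
            Submodule.inner_left_of_mem_orthogonal (SetLike.coe_mem (P y)) (SetLike.coe_mem (P' x))]
          ring
      _ = ⟪x, y⟫_ℂ := by rw [hx, hy]
  · intro v
    have h1 : P (T v) = T.rangeRestrict v := by
      have := orthogonalProjection_mem_subspace_eq_self (K := LinearMap.range T)
        (T.rangeRestrict v)
      simpa using this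
    have h2 : P' (T v) = 0 := by
      apply orthogonalProjection_mem_subspace_orthogonalComplement_eq_zero
      exact Submodule.le_orthogonal_orthogonal _ (LinearMap.mem_range_self T v)
    simp only [LinearMap.add_apply, LinearMap.comp_apply, ContinuousLinearMap.coe_coe,
      h1, h2, map_zero, add_zero]
    exact hψ v

lemma toEuclideanLin_mul' {I Q R : Type*} [Fintype Q] [DecidableEq Q] [Fintype R] [DecidableEq R]
    (M : Matrix I Q ℂ) (N : Matrix Q R ℂ) :
    Matrix.toEuclideanLin (M * N) = (Matrix.toEuclideanLin M) ∘ₗ (Matrix.toEuclideanLin N) := by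
  apply LinearMap.ext; intro v
  simp [Matrix.toEuclideanLin_apply, Matrix.mulVec_mulVec]

lemma toEuclideanLin_one' {I : Type*} [Fintype I] [DecidableEq I] :
    Matrix.toEuclideanLin (1 : Matrix I I ℂ) = LinearMap.id := by
  apply LinearMap.ext; intro v
  simp [Matrix.toEuclideanLin_apply, Matrix.one_mulVec]

lemma exists_isometry_matrix {I J Q : Type} [Fintype I] [Fintype J] [Fintype Q]
    [DecidableEq I] [DecidableEq J] [DecidableEq Q]
    (A : Matrix I Q ℂ) (B : Matrix J Q ℂ) (hG : Aᴴ * A = Bᴴ * B)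
    (hc : Fintype.card I ≤ Fintype.card J) :
    ∃ W : Matrix J I ℂ, Wᴴ * W = 1 ∧ W * A = B := by
  set T := Matrix.toEuclideanLin A with hT
  set S := Matrix.toEuclideanLin B with hS
  have hinner : ∀ x y, ⟪T x, T y⟫_ℂ = ⟪S x, S y⟫_ℂ := by
    intro x y
    have hA : (LinearMap.adjoint T).comp T = Matrix.toEuclideanLin (Aᴴ * A) := by
      rw [toEuclideanLin_mul', Matrix.toEuclideanLin_conjTranspose_eq_adjoint]
    have hB : (LinearMap.adjoint S).comp S = Matrix.toEuclideanLin (Bᴴ * B) := by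
      rw [toEuclideanLin_mul', Matrix.toEuclideanLin_conjTranspose_eq_adjoint]
    calc ⟪T x, T y⟫_ℂ = ⟪x, ((LinearMap.adjoint T).comp T) y⟫_ℂ :=
          (LinearMap.adjoint_inner_right T x (T y)).symm
      _ = ⟪x, ((LinearMap.adjoint S).comp S) y⟫_ℂ := by rw [hA, hB, hG]
      _ = ⟪S x, S y⟫_ℂ := LinearMap.adjoint_inner_right S x (S y)
  have hd : finrank ℂ (EuclideanSpace ℂ I) ≤ finrank ℂ (EuclideanSpace ℂ J) := by
    rw [finrank_euclideanSpace, finrank_euclideanSpace]; exact hc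
  obtain ⟨W, hWinner, hWcomp⟩ := exists_innerMap_comp T S hinner hd
  refine ⟨Matrix.toEuclideanLin.symm W, ?_, ?_⟩
  · apply Matrix.toEuclideanLin.injective
    rw [toEuclideanLin_mul', Matrix.toEuclideanLin_conjTranspose_eq_adjoint,
      LinearEquiv.apply_symm_apply, toEuclideanLin_one']
    apply LinearMap.ext; intro x
    apply ext_inner_left ℂ; intro y
    rw [LinearMap.comp_apply, LinearMap.adjoint_inner_right, hWinner, LinearMap.id_apply]
  · apply Matrix.toEuclideanLin.injective
    rw [toEuclideanLin_mul', LinearEquiv.apply_symm_apply, ← hT, ← hS]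
    exact LinearMap.ext hWcomp

open Matrix Kronecker MeasureTheory
open scoped BigOperators

lemma tpow_conjTranspose {m : ℕ} (U : Matrix (Fin m) (Fin m) ℂ) (t : ℕ)
    (a b : Fin t → Fin m) : tpow Uᴴ t a b = star (tpow U t b a) := by
  simp [tpow, Matrix.conjTranspose_apply, star_prod]

lemma tpow_append {m ℓ k : ℕ} (U : Matrix (Fin m) (Fin m) ℂ)
    (a c : Fin ℓ → Fin m) (b d : Fin k → Fin m) :
    tpow U (ℓ + k) (Fin.append a b) (Fin.append c d) = tpow U ℓ a c * tpow U k b d := by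
  unfold tpow
  rw [Fin.prod_univ_add]
  congr 1
  · exact Finset.prod_congr rfl fun i _ => by rw [Fin.append_left, Fin.append_left]
  · exact Finset.prod_congr rfl fun i _ => by rw [Fin.append_right, Fin.append_right]

lemma twirl_single_entry {α : Type*} [Fintype α] [DecidableEq α]
    (T : Matrix α α ℂ) (q0 q0' P P' : α) :
    (T * Matrix.of (fun a b => (if a = q0 then (1:ℂ) else 0) * (if b = q0' then 1 else 0)) * Tᴴ) P P'
      = T P q0 * star (T P' q0') := by
  simp [Matrix.mul_apply, Matrix.conjTranspose_apply, mul_ite, ite_mul, mul_zero, zero_mul,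
    mul_one, one_mul, Finset.sum_ite_eq, Finset.sum_ite_eq', Finset.mem_univ, Finset.mul_sum,
    Finset.sum_mul]

lemma sqrt_card_inv_mul {I : Type} [Fintype I] :
    star (((Real.sqrt (Fintype.card I) : ℂ))⁻¹) * ((Real.sqrt (Fintype.card I) : ℂ))⁻¹
      = (Fintype.card I : ℂ)⁻¹ := by
  rw [star_inv₀, Complex.star_def, Complex.conj_ofReal, ← mul_inv, ← Complex.ofReal_mul,
    Real.mul_self_sqrt (Nat.cast_nonneg _)]
  norm_num

lemma ctrl_gram_entry {n ℓ k : ℕ} {I : Type} [Fintype I]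
    (U : I → Matrix (Fin (2 ^ n)) (Fin (2 ^ n)) ℂ) (i : I)
    (p1 p1' q1 q1' : Fin ℓ → Fin (2 ^ n)) (p2 p2' q2 q2' : Fin k → Fin (2 ^ n)) :
    star (ctrlDilation U ℓ k ((p1, p2), i) (q1, q2))
        * ctrlDilation U ℓ k ((p1', p2'), i) (q1', q2')
      = (Fintype.card I : ℂ)⁻¹ *
          (tpow (U i) (ℓ + k) (Fin.append p1' q2) (Fin.append q1' p2) *
            star (tpow (U i) (ℓ + k) (Fin.append p1 q2') (Fin.append q1 p2'))) := by
  have h1 := tpow_append (U i) p1' q1' q2 p2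
  have h2 := tpow_append (U i) p1 q1 q2' p2'
  simp only [ctrlDilation, mixedPow]
  rw [h1, h2]
  simp only [tpow_conjTranspose, star_mul', star_star]
  rw [← sqrt_card_inv_mul (I := I)]
  ring

/-- **Existence of the design-transition isometry:** if `D = {U_i}_{i∈I}` and
`D' = {U'_j}_{j∈J}` are `n`-qubit unitary `t`-designs (`t = ℓ + k`; the design property is
stated entrywise with respect to the Haar probability measure `μ`), with `|I| ≤ |J|`, then
for the splitting `t = ℓ + k` there is an isometry `W : ℂ^I → ℂ^J` (i.e. `W†W = 𝟙`) with
`(𝟙 ⊗ W) ∘ (|I|^{-1/2} ∑_i (U_i^{⊗ℓ} ⊗ (U_i†)^{⊗(t-ℓ)}) ⊗ |i⟩)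
  = |J|^{-1/2} ∑_j ((U'_j)^{⊗ℓ} ⊗ ((U'_j)†)^{⊗(t-ℓ)}) ⊗ |j⟩`. -/
theorem exists_design_transition_isometry (n ℓ k : ℕ)
    [MeasurableSpace (Matrix.unitaryGroup (Fin (2 ^ n)) ℂ)]
    [BorelSpace (Matrix.unitaryGroup (Fin (2 ^ n)) ℂ)]
    (μ : Measure (Matrix.unitaryGroup (Fin (2 ^ n)) ℂ))
    [μ.IsHaarMeasure] [IsProbabilityMeasure μ]
    (I J : Type) [Fintype I] [DecidableEq I] [Nonempty I] [Fintype J] [DecidableEq J]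
    (hcard : Fintype.card I ≤ Fintype.card J)
    (U : I → Matrix (Fin (2 ^ n)) (Fin (2 ^ n)) ℂ)
    (U' : J → Matrix (Fin (2 ^ n)) (Fin (2 ^ n)) ℂ)
    (hU : ∀ i, U i ∈ Matrix.unitaryGroup (Fin (2 ^ n)) ℂ)
    (hU' : ∀ j, U' j ∈ Matrix.unitaryGroup (Fin (2 ^ n)) ℂ)
    (hdesign : ∀ X : Matrix (Fin (ℓ + k) → Fin (2 ^ n)) (Fin (ℓ + k) → Fin (2 ^ n)) ℂ,
      ∀ p q,
      (Fintype.card I : ℂ)⁻¹ * ∑ i : I, (tpow (U i) (ℓ + k) * X * (tpow (U i) (ℓ + k))ᴴ) p q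
        = ∫ V : Matrix.unitaryGroup (Fin (2 ^ n)) ℂ,
            (tpow (V : Matrix (Fin (2 ^ n)) (Fin (2 ^ n)) ℂ) (ℓ + k) * X *
              (tpow (V : Matrix (Fin (2 ^ n)) (Fin (2 ^ n)) ℂ) (ℓ + k))ᴴ) p q ∂μ)
    (hdesign' : ∀ X : Matrix (Fin (ℓ + k) → Fin (2 ^ n)) (Fin (ℓ + k) → Fin (2 ^ n)) ℂ,
      ∀ p q,
      (Fintype.card J : ℂ)⁻¹ * ∑ j : J, (tpow (U' j) (ℓ + k) * X * (tpow (U' j) (ℓ + k))ᴴ) p q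
        = ∫ V : Matrix.unitaryGroup (Fin (2 ^ n)) ℂ,
            (tpow (V : Matrix (Fin (2 ^ n)) (Fin (2 ^ n)) ℂ) (ℓ + k) * X *
              (tpow (V : Matrix (Fin (2 ^ n)) (Fin (2 ^ n)) ℂ) (ℓ + k))ᴴ) p q ∂μ) :
    ∃ W : Matrix J I ℂ,
      Wᴴ * W = 1 ∧
      ((1 : Matrix ((Fin ℓ → Fin (2 ^ n)) × (Fin k → Fin (2 ^ n)))
          ((Fin ℓ → Fin (2 ^ n)) × (Fin k → Fin (2 ^ n))) ℂ) ⊗ₖ W) * ctrlDilation U ℓ k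
        = ctrlDilation U' ℓ k := by
  classical
  let A : Matrix I (((Fin ℓ → Fin (2 ^ n)) × (Fin k → Fin (2 ^ n))) ×
      ((Fin ℓ → Fin (2 ^ n)) × (Fin k → Fin (2 ^ n)))) ℂ :=
    fun i x => ctrlDilation U ℓ k (x.1, i) x.2
  let B : Matrix J (((Fin ℓ → Fin (2 ^ n)) × (Fin k → Fin (2 ^ n))) ×
      ((Fin ℓ → Fin (2 ^ n)) × (Fin k → Fin (2 ^ n)))) ℂ :=
    fun j x => ctrlDilation U' ℓ k (x.1, j) x.2
  have key : Aᴴ * A = Bᴴ * B := by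
    ext x y
    obtain ⟨⟨p1, p2⟩, q1, q2⟩ := x
    obtain ⟨⟨p1', p2'⟩, q1', q2'⟩ := y
    have hI := hdesign (Matrix.of fun a b =>
      (if a = Fin.append q1' p2 then (1 : ℂ) else 0) *
        (if b = Fin.append q1 p2' then 1 else 0))
      (Fin.append p1' q2) (Fin.append p1 q2')
    have hJ := hdesign' (Matrix.of fun a b =>
      (if a = Fin.append q1' p2 then (1 : ℂ) else 0) *
        (if b = Fin.append q1 p2' then 1 else 0))
      (Fin.append p1' q2) (Fin.append p1 q2')
    have hA : (Aᴴ * A) ((p1, p2), (q1, q2)) ((p1', p2'), (q1', q2'))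
        = (Fintype.card I : ℂ)⁻¹ * ∑ i : I,
            (tpow (U i) (ℓ + k) * (Matrix.of fun a b =>
              (if a = Fin.append q1' p2 then (1 : ℂ) else 0) *
                (if b = Fin.append q1 p2' then 1 else 0)) *
              (tpow (U i) (ℓ + k))ᴴ) (Fin.append p1' q2) (Fin.append p1 q2') := by
      rw [Matrix.mul_apply, Finset.mul_sum]
      refine Finset.sum_congr rfl fun i _ => ?_
      rw [Matrix.conjTranspose_apply, twirl_single_entry]
      exact ctrl_gram_entry U i p1 p1' q1 q1' p2 p2' q2 q2'
    have hB : (Bᴴ * B) ((p1, p2), (q1, q2)) ((p1', p2'), (q1', q2'))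
        = (Fintype.card J : ℂ)⁻¹ * ∑ j : J,
            (tpow (U' j) (ℓ + k) * (Matrix.of fun a b =>
              (if a = Fin.append q1' p2 then (1 : ℂ) else 0) *
                (if b = Fin.append q1 p2' then 1 else 0)) *
              (tpow (U' j) (ℓ + k))ᴴ) (Fin.append p1' q2) (Fin.append p1 q2') := by
      rw [Matrix.mul_apply, Finset.mul_sum]
      refine Finset.sum_congr rfl fun j _ => ?_
      rw [Matrix.conjTranspose_apply, twirl_single_entry]
      exact ctrl_gram_entry U' j p1 p1' q1 q1' p2 p2' q2 q2'
    rw [hA, hB, hI, hJ]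
  obtain ⟨W, hW1, hW2⟩ := exists_isometry_matrix A B key hcard
  refine ⟨W, hW1, ?_⟩
  ext ⟨p, j⟩ q
  have hcol : ∑ i : I, W j i * ctrlDilation U ℓ k (p, i) q = ctrlDilation U' ℓ k (p, j) q := by
    have h := congrFun (congrFun hW2 j) (p, q)
    rw [Matrix.mul_apply] at h
    exact h
  rw [Matrix.mul_apply, Fintype.sum_prod_type]
  calc ∑ p' : (Fin ℓ → Fin (2 ^ n)) × (Fin k → Fin (2 ^ n)), ∑ i : I,
        ((1 : Matrix ((Fin ℓ → Fin (2 ^ n)) × (Fin k → Fin (2 ^ n)))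
          ((Fin ℓ → Fin (2 ^ n)) × (Fin k → Fin (2 ^ n))) ℂ) ⊗ₖ W) (p, j) (p', i) *
          ctrlDilation U ℓ k (p', i) q
      = ∑ i : I, W j i * ctrlDilation U ℓ k (p, i) q := by
        simp [Matrix.one_apply, ite_mul, zero_mul]
    _ = ctrlDilation U' ℓ k (p, j) q := hcol
end

section
/- Equivalence of finite-dimensional Stinespring dilations: let H, K, E, E' be finite-dimensional complex Hilbert spaces with dim E ≤ dim E', and let V : H → K ⊗ E and V' : H → K ⊗ E' be isometries that dilate the same quantum channel, i.e. Tr_E(V ρ V†) = Tr_{E'}(V' ρ (V')†) for every linear operator ρ on H (where Tr_E and Tr_{E'} denote the partial traces over E and E'). Then there exists a partial isometry W : E → E' such that (𝟙_K ⊗ W) V = V'. -/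
/-!
Regard `V` as the matrix `X : E × (K × H)` with `X e (k, h) = V (k, e) h`. Then
`(𝟙_K ⊗ W) V = V'` reads `W X = Y`, and the partial trace of `V ρ V†` at `ρ = |h⟩⟨h'|` is an entry
of the Gram matrix `X† X`, so dilating the same channel means `X† X = Y† Y`. Equal Gram matrices
are related by a partial isometry: `range Y† = range (Y† Y) = range (X† X)`, so `Y† = X† X U` for
some `U`, and `W = U† X†` satisfies `W X = Y` and `W W† W = W`.
-/

open Matrix Kronecker

namespace Matrix

section Factorization

variable {m n k R : Type*} [Fintype m]

theorem exists_mul_eq_of_range_le [Fintype k] [DecidableEq k] [CommSemiring R]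
    {A : Matrix n m R} {B : Matrix n k R}
    (h : LinearMap.range B.mulVecLin ≤ LinearMap.range A.mulVecLin) :
    ∃ C : Matrix m k R, A * C = B := by
  have hcol : ∀ j : k, ∃ c : m → R, A *ᵥ c = B *ᵥ Pi.single j 1 :=
    fun j => h (LinearMap.mem_range_self _ _)
  choose c hc using hcol
  refine ⟨of fun i j => c j i, ext fun i j => ?_⟩
  simpa [mul_apply, mulVec, dotProduct, Pi.single_apply] using congrFun (hc j) i

theorem range_mulVecLin_conjTranspose_mul_self [Fintype n] [Field R] [PartialOrder R]
    [StarRing R] [StarOrderedRing R] (A : Matrix n m R) :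
    LinearMap.range (Aᴴ * A).mulVecLin = LinearMap.range Aᴴ.mulVecLin := by
  apply Submodule.eq_of_le_of_finrank_eq
  · rw [mulVecLin_mul]
    exact LinearMap.range_comp_le_range _ _
  · have hrank := rank_self_mul_conjTranspose Aᴴ
    rwa [conjTranspose_conjTranspose] at hrank

end Factorization

section PartialIsometry

variable {m n p R : Type*} [Fintype m] [Fintype n] [Fintype p]

theorem isStarProjection_conjTranspose_mul_self [Semiring R] [StarRing R] {W : Matrix m n R}
    (hW : W * Wᴴ * W = W) : IsStarProjection (Wᴴ * W) where
  isIdempotentElem := by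
    rw [IsIdempotentElem, Matrix.mul_assoc, ← Matrix.mul_assoc W, hW]
  isSelfAdjoint := by
    rw [IsSelfAdjoint, star_eq_conjTranspose, conjTranspose_mul, conjTranspose_conjTranspose]

theorem exists_isStarProjection_mul_eq_of_conjTranspose_mul_self_eq [Field R] [PartialOrder R]
    [StarRing R] [StarOrderedRing R] {X : Matrix m n R} {Y : Matrix p n R}
    (hXY : Xᴴ * X = Yᴴ * Y) : ∃ W : Matrix p m R, IsStarProjection (Wᴴ * W) ∧ W * X = Y := by
  classical
  obtain ⟨U, hU⟩ := exists_mul_eq_of_range_le (A := Xᴴ * X) (B := Yᴴ) <| by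
    rw [hXY, range_mulVecLin_conjTranspose_mul_self]
  obtain ⟨C, hC⟩ := exists_mul_eq_of_range_le (A := Xᴴ * X) (B := Xᴴ)
    (range_mulVecLin_conjTranspose_mul_self X).ge
  have hUX : Uᴴ * (Xᴴ * X) = Y := by
    simpa only [conjTranspose_mul, conjTranspose_conjTranspose, Matrix.mul_assoc] using
      congrArg conjTranspose hU
  have hpartialIsometry : Uᴴ * Xᴴ * (Uᴴ * Xᴴ)ᴴ * (Uᴴ * Xᴴ) = Uᴴ * Xᴴ :=
    calc Uᴴ * Xᴴ * (Uᴴ * Xᴴ)ᴴ * (Uᴴ * Xᴴ)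
        = Uᴴ * (Xᴴ * X * U) * (Uᴴ * (Xᴴ * X * C)) := by
          rw [hC]
          simp only [conjTranspose_mul, conjTranspose_conjTranspose, Matrix.mul_assoc]
      _ = Uᴴ * (Xᴴ * X * U) * (Uᴴ * (Xᴴ * X)) * C := by simp only [Matrix.mul_assoc]
      _ = Uᴴ * Xᴴ := by rw [hU, hUX, Matrix.mul_assoc Uᴴ Yᴴ Y, ← hXY, Matrix.mul_assoc, hC]
  exact ⟨Uᴴ * Xᴴ, isStarProjection_conjTranspose_mul_self hpartialIsometry,
    by rw [Matrix.mul_assoc, hUX]⟩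

end PartialIsometry

section Dilation

variable {H K E E' R : Type*}

def partialTraceRight [Fintype E] [AddCommMonoid R] (A : Matrix (K × E) (K × E) R) :
    Matrix K K R :=
  of fun k k' => ∑ e, A (k, e) (k', e)

def curryEnv (V : Matrix (K × E) H R) : Matrix E (K × H) R :=
  of fun e x => V (x.1, e) x.2

theorem curryEnv_injective : Function.Injective (curryEnv : Matrix (K × E) H R → _) :=
  fun _ _ h => ext fun x y => congrFun (congrFun h x.2) (x.1, y)

theorem curryEnv_one_kronecker_mul [Fintype K] [Fintype E] [DecidableEq K] [Semiring R]
    (W : Matrix E' E R) (V : Matrix (K × E) H R) :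
    curryEnv ((1 : Matrix K K R) ⊗ₖ W * V) = W * curryEnv V := by
  ext e' ⟨k, h⟩
  simp [curryEnv, mul_apply, Fintype.sum_prod_type, one_apply]

theorem partialTraceRight_mul_single_mul_conjTranspose [Fintype H] [DecidableEq H] [Fintype E]
    [CommSemiring R] [StarRing R] (V : Matrix (K × E) H R) (h h' : H) (k k' : K) :
    partialTraceRight (V * single h h' (1 : R) * Vᴴ) k k' =
      ((curryEnv V)ᴴ * curryEnv V) (k', h') (k, h) := by
  simp [partialTraceRight, curryEnv, mul_apply, single, ite_and, mul_comm]

theorem conjTranspose_curryEnv_mul_curryEnv_eq_of_partialTraceRight_eq [Fintype H]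
    [DecidableEq H] [Fintype E] [Fintype E'] [CommSemiring R] [StarRing R]
    {V : Matrix (K × E) H R} {V' : Matrix (K × E') H R}
    (hchan : ∀ ρ : Matrix H H R,
      partialTraceRight (V * ρ * Vᴴ) = partialTraceRight (V' * ρ * V'ᴴ)) :
    (curryEnv V)ᴴ * curryEnv V = (curryEnv V')ᴴ * curryEnv V' := by
  ext ⟨k', h'⟩ ⟨k, h⟩
  simpa only [partialTraceRight_mul_single_mul_conjTranspose] using
    congrFun (congrFun (hchan (single h h' 1)) k) k'

end Dilation

end Matrix

theorem stinespring_dilations_equivalent_general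
    (H K E E' : Type) [Fintype H] [Fintype K] [DecidableEq K]
    [Fintype E] [Fintype E']
    (V : Matrix (K × E) H ℂ) (V' : Matrix (K × E') H ℂ)
    (hchan : ∀ ρ : Matrix H H ℂ, ∀ kk kk' : K,
      ∑ e : E, (V * ρ * Vᴴ) (kk, e) (kk', e) = ∑ e' : E', (V' * ρ * V'ᴴ) (kk, e') (kk', e')) :
    ∃ W : Matrix E' E ℂ,
      (Wᴴ * W)ᴴ = Wᴴ * W ∧ (Wᴴ * W) * (Wᴴ * W) = Wᴴ * W ∧
      ((1 : Matrix K K ℂ) ⊗ₖ W) * V = V' := by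
  classical
  have hGram := conjTranspose_curryEnv_mul_curryEnv_eq_of_partialTraceRight_eq fun ρ =>
    ext (hchan ρ)
  open ComplexOrder in
  obtain ⟨W, hproj, hWX⟩ := exists_isStarProjection_mul_eq_of_conjTranspose_mul_self_eq hGram
  exact ⟨W, hproj.isSelfAdjoint, hproj.isIdempotentElem,
    curryEnv_injective (by rw [curryEnv_one_kronecker_mul, hWX])⟩

/-- **Equivalence of finite-dimensional Stinespring dilations:** let `H, K, E, E'` be
finite-dimensional complex Hilbert spaces (realized as `ℂ^H, ℂ^K, ℂ^E, ℂ^{E'}` for finite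
index types) with `dim E ≤ dim E'`, and let `V : H → K ⊗ E` and `V' : H → K ⊗ E'` be
isometries (`V†V = 𝟙`, `V'†V' = 𝟙`) dilating the same quantum channel, i.e.
`Tr_E(V ρ V†) = Tr_{E'}(V' ρ V'†)` for every operator `ρ` on `H` (partial traces stated
entrywise). Then there is a partial isometry `W : E → E'` (i.e. `W†W` is an orthogonal
projection) with `(𝟙_K ⊗ W) V = V'`. -/
theorem stinespring_dilations_equivalent
    (H K E E' : Type) [Fintype H] [DecidableEq H] [Fintype K] [DecidableEq K]
    [Fintype E] [DecidableEq E] [Fintype E'] [DecidableEq E']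
    (hdim : Fintype.card E ≤ Fintype.card E')
    (V : Matrix (K × E) H ℂ) (V' : Matrix (K × E') H ℂ)
    (hV : Vᴴ * V = 1) (hV' : V'ᴴ * V' = 1)
    (hchan : ∀ ρ : Matrix H H ℂ, ∀ kk kk' : K,
      ∑ e : E, (V * ρ * Vᴴ) (kk, e) (kk', e) = ∑ e' : E', (V' * ρ * V'ᴴ) (kk, e') (kk', e')) :
    ∃ W : Matrix E' E ℂ,
      (Wᴴ * W)ᴴ = Wᴴ * W ∧ (Wᴴ * W) * (Wᴴ * W) = Wᴴ * W ∧
      ((1 : Matrix K K ℂ) ⊗ₖ W) * V = V' :=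
  stinespring_dilations_equivalent_general H K E E' V V' hchan
end
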